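/- Let S be a string and let P, P' be patterns with P a prefix of P'. Then the number of consecutive occurrences of P' in S that are not consecutive occurrences of P in S is at most the number of positions that are occurrences of P but not occurrences of P'; that is, card(D_S(P') \ D_S(P)) ≤ card(Occ_S(P) \ Occ_S(P')). In particular, card(D_S(P) Δ D_S(P')) ≤ 3 · card(Occ_S(P) \ Occ_S(P')). -/
import Mathlib


variable {α : Type*}

/-- `i` is an occurrence of pattern `P` in string `S`. -/
def IsOcc (S P : List α) (i : ℕ) : Prop :=
  i + P.length ≤ S.length ∧ ∀ t < P.length, S[i + t]? = P[t]?

/-- The set of occurrences of `P` in `S`. -/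
def OccSet (S P : List α) : Set ℕ := {i | IsOcc S P i}

/-- `(i, j)` is a consecutive occurrence of `P` in `S`. -/
def IsConsec (S P : List α) (i j : ℕ) : Prop :=
  i < j ∧ IsOcc S P i ∧ IsOcc S P j ∧ ∀ k, i < k → k < j → ¬ IsOcc S P k

/-- The set of consecutive occurrences of `P` in `S`. -/
def DSet (S P : List α) : Set (ℕ × ℕ) := {p | IsConsec S P p.1 p.2}

lemma occSet_subset (S P P' : List α) (hpre : P <+: P') :
    OccSet S P' ⊆ OccSet S P := by
  obtain ⟨Q, rfl⟩ := hpre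
  rintro i ⟨h1, h2⟩
  refine ⟨?_, fun t ht => ?_⟩
  · have : P.length ≤ (P ++ Q).length := by simp
    omega
  · rw [h2 t (by simp; omega), List.getElem?_append_left ht]

lemma occSet_finite (S P : List α) : (OccSet S P).Finite :=
  (Set.finite_Iic S.length).subset fun i hi => le_trans (Nat.le_add_right _ _) hi.1

lemma dset_finite (S P : List α) : (DSet S P).Finite := by
  apply Set.Finite.subset ((occSet_finite S P).prod (occSet_finite S P))
  rintro ⟨i, j⟩ h
  exact ⟨h.2.1, h.2.2.1⟩

lemma consec_right_unique {S P : List α} {i j j' : ℕ}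
    (h : IsConsec S P i j) (h' : IsConsec S P i j') : j = j' := by
  by_contra hne
  rcases lt_or_gt_of_ne hne with hlt | hgt
  · exact h'.2.2.2 j h.1 hlt h.2.2.1
  · exact h.2.2.2 j' h'.1 hgt h'.2.2.1

lemma consec_left_unique {S P : List α} {i i' j : ℕ}
    (h : IsConsec S P i j) (h' : IsConsec S P i' j) : i = i' := by
  by_contra hne
  rcases lt_or_gt_of_ne hne with hlt | hgt
  · exact h.2.2.2 i' hlt h'.1 h'.2.1
  · exact h'.2.2.2 i hgt h.1 h.2.1

lemma consec_left_eq {S P : List α} {i i' j j' k : ℕ}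
    (h : IsConsec S P i j) (h' : IsConsec S P i' j')
    (hk1 : i < k) (hk2 : k < j) (hk1' : i' < k) (hk2' : k < j') : i = i' := by
  rcases lt_trichotomy i i' with h1 | h1 | h1
  · exact absurd h'.2.1 (h.2.2.2 i' h1 (hk1'.trans hk2))
  · exact h1
  · exact absurd h.2.1 (h'.2.2.2 i h1 (hk1.trans hk2'))

/-- The number of consecutive occurrences of `P'` that are not consecutive occurrences of the
prefix `P` is at most the number of occurrences of `P` that are not occurrences of `P'`;
in particular the symmetric difference of the two sets of consecutive occurrences has size
at most three times that number. -/
theorem stmt_6 (S P P' : List α) (hpre : P <+: P') :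
    (DSet S P' \ DSet S P).ncard ≤ (OccSet S P \ OccSet S P').ncard ∧
    ((DSet S P \ DSet S P') ∪ (DSet S P' \ DSet S P)).ncard
      ≤ 3 * (OccSet S P \ OccSet S P').ncard := by
  classical
  set A := OccSet S P \ OccSet S P' with hA
  have hAfin : A.Finite := (occSet_finite S P).subset Set.diff_subset
  -- choice of intermediate occurrence for each pair in D(P') \ D(P)
  set f : ℕ × ℕ → ℕ := fun p => sInf {k | p.1 < k ∧ k < p.2 ∧ IsOcc S P k} with hf
  have key : ∀ p ∈ DSet S P' \ DSet S P,
      p.1 < f p ∧ f p < p.2 ∧ IsOcc S P (f p) := by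
    rintro ⟨i, j⟩ ⟨hp', hp⟩
    have hne : {k | i < k ∧ k < j ∧ IsOcc S P k}.Nonempty := by
      by_contra h
      apply hp
      refine ⟨hp'.1, occSet_subset S P P' hpre hp'.2.1,
        occSet_subset S P P' hpre hp'.2.2.1, fun k hk1 hk2 hk3 => h ⟨k, hk1, hk2, hk3⟩⟩
    exact Nat.sInf_mem hne
  have h1 : (DSet S P' \ DSet S P).ncard ≤ A.ncard := by
    apply Set.ncard_le_ncard_of_injOn f ?_ ?_ hAfin
    · rintro ⟨i, j⟩ hp
      obtain ⟨hk1, hk2, hk3⟩ := key _ hp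
      exact ⟨hk3, fun hocc' => hp.1.2.2.2 (f (i, j)) hk1 hk2 hocc'⟩
    · rintro ⟨i, j⟩ hp ⟨i', j'⟩ hp' hfe
      obtain ⟨a1, a2, _⟩ := key _ hp
      obtain ⟨b1, b2, _⟩ := key _ hp'
      rw [hfe] at a1 a2
      have hii : i = i' := consec_left_eq hp.1 hp'.1 a1 a2 b1 b2
      subst hii
      have : j = j' := consec_right_unique hp.1 hp'.1
      simp [this]
  -- second part: D(P) \ D(P')
  set X := DSet S P \ DSet S P' with hX
  set L := {p ∈ X | p.1 ∈ A} with hL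
  set R := {p ∈ X | p.1 ∉ A} with hR
  have hXfin : X.Finite := (dset_finite S P).subset Set.diff_subset
  have hsplit : X = L ∪ R := by
    ext p; simp only [hL, hR, Set.mem_union, Set.mem_setOf_eq, Set.mem_sep_iff]; tauto
  have hLcard : L.ncard ≤ A.ncard := by
    apply Set.ncard_le_ncard_of_injOn Prod.fst ?_ ?_ hAfin
    · rintro ⟨i, j⟩ hp; exact hp.2
    · rintro ⟨i, j⟩ hp ⟨i', j'⟩ hp' hfe
      simp only at hfe
      subst hfe
      have : j = j' := consec_right_unique hp.1.1 hp'.1.1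
      simp [this]
  have hRcard : R.ncard ≤ A.ncard := by
    apply Set.ncard_le_ncard_of_injOn Prod.snd ?_ ?_ hAfin
    · rintro ⟨i, j⟩ ⟨⟨hD, hD'⟩, hiA⟩
      have hiP : i ∈ OccSet S P := hD.2.1
      have hiP' : i ∈ OccSet S P' := by
        by_contra h; exact hiA ⟨hiP, h⟩
      refine ⟨hD.2.2.1, fun hjP' => ?_⟩
      apply hD'
      exact ⟨hD.1, hiP', hjP', fun k hk1 hk2 hkP' =>
        hD.2.2.2 k hk1 hk2 (occSet_subset S P P' hpre hkP')⟩
    · rintro ⟨i, j⟩ hp ⟨i', j'⟩ hp' hfe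
      simp only at hfe
      subst hfe
      have : i = i' := consec_left_unique hp.1.1 hp'.1.1
      simp [this]
  have h2 : X.ncard ≤ 2 * A.ncard := by
    calc X.ncard = (L ∪ R).ncard := by rw [hsplit]
      _ ≤ L.ncard + R.ncard := Set.ncard_union_le L R
      _ ≤ 2 * A.ncard := by omega
  refine ⟨h1, ?_⟩
  calc (X ∪ (DSet S P' \ DSet S P)).ncard
      ≤ X.ncard + (DSet S P' \ DSet S P).ncard :=
        Set.ncard_union_le _ _
    _ ≤ 2 * A.ncard + A.ncard := add_le_add h2 h1
    _ = 3 * A.ncard := by ring
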